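/- (Mosco liminf inequality.) Let (α_n) ⊂ (0,1) be a sequence with α_n → 0, and let (φ_n) ⊂ L²(Q) converge weakly in L²(Q) to some φ ∈ L²(Q). Then liminf_{n→∞} E_{sg,α_n}(φ_n) ≥ I_K(φ), where the liminf is taken in [0,∞]. -/

import Mathlib

/-!
Test the weak convergence against `g = 𝟙_A · sign φ` with `A` measurable: `∫ φ g = ∫_A |φ|`,
while `∫ φₙ g ≤ (1 + αₙ) |A|` whenever `E_{sg,αₙ}(φₙ) < ∞`. If that happens for infinitely many
`n`, the limit gives `∫_A |φ| ≤ |A|` for every `A`, hence `|φ| ≤ 1` a.e.; otherwise the liminf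
is `∞`.
-/

open MeasureTheory Filter Set Classical
open scoped ENNReal

/-- The logarithmic potential `W_{sg,α}(s) = α((1+α+s)log(1+α+s) + (1+α−s)log(1+α−s))`.
(In Mathlib, `Real.log 0 = 0`, so the convention `0·log 0 = 0` holds automatically.) -/
noncomputable def Wsg (α s : ℝ) : ℝ :=
  α * ((1 + α + s) * Real.log (1 + α + s) + (1 + α - s) * Real.log (1 + α - s))

/-- The Lebesgue measure restricted to `Q = Ω × (0,T')`. -/
noncomputable def Qmeasure (Ω : Set (EuclideanSpace ℝ (Fin 3))) (T' : ℝ) :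
    Measure (EuclideanSpace ℝ (Fin 3) × ℝ) :=
  volume.restrict (Ω ×ˢ Set.Ioo 0 T')

/-- The functional `E_{sg,α} : L²(Q) → [0,∞]`, equal to `∫_Q W_{sg,α}(φ)` if
`|φ| ≤ 1+α` a.e. in `Q`, and `+∞` otherwise. -/
noncomputable def Esg {X : Type*} [MeasurableSpace X] (μ : Measure X) (α : ℝ)
    (φ : X → ℝ) : ℝ≥0∞ :=
  if ∀ᵐ x ∂μ, |φ x| ≤ 1 + α then ∫⁻ x, ENNReal.ofReal (Wsg α (φ x)) ∂μ else ⊤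

/-- The indicator functional `I_K` of `K = {φ ∈ L²(Q) : |φ| ≤ 1 a.e.}`. -/
noncomputable def IK {X : Type*} [MeasurableSpace X] (μ : Measure X)
    (φ : X → ℝ) : ℝ≥0∞ :=
  if ∀ᵐ x ∂μ, |φ x| ≤ 1 then 0 else ⊤

open scoped Topology

namespace Real

lemma measurable_sign : Measurable Real.sign :=
  Measurable.ite measurableSet_Iio measurable_const
    (Measurable.ite measurableSet_Ioi measurable_const measurable_const)

lemma self_mul_sign (r : ℝ) : r * Real.sign r = |r| := by
  rcases lt_trichotomy r 0 with hr | rfl | hr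
  · rw [sign_of_neg hr, abs_of_neg hr, mul_neg_one]
  · simp
  · rw [sign_of_pos hr, abs_of_pos hr, mul_one]

lemma abs_sign_le_one (r : ℝ) : |Real.sign r| ≤ 1 := by
  rcases sign_apply_eq r with h | h | h <;> simp [h]

end Real

lemma abs_indicator_sign_le_one {X : Type*} {A : Set X} {g : X → ℝ} (x : X) :
    |A.indicator (fun y => Real.sign (g y)) x| ≤ 1 := by
  by_cases hx : x ∈ A
  · rw [indicator_of_mem hx]; exact Real.abs_sign_le_one _
  · simp [indicator_of_notMem hx]

section WeakLimit

variable {X : Type*} [MeasurableSpace X] {μ : Measure X} {A : Set X} {f g : X → ℝ}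

lemma memLp_indicator_sign [IsFiniteMeasure μ] (hg : AEStronglyMeasurable g μ)
    (hA : MeasurableSet A) (p : ℝ≥0∞) : MemLp (A.indicator fun x => Real.sign (g x)) p μ :=
  MemLp.of_bound
    ((Real.measurable_sign.comp_aemeasurable hg.aemeasurable).indicator hA).aestronglyMeasurable 1
    (Eventually.of_forall fun _ => abs_indicator_sign_le_one _)

lemma integral_mul_indicator_sign_self (hA : MeasurableSet A) :
    ∫ x, f x * A.indicator (fun y => Real.sign (f y)) x ∂μ = ∫ x in A, |f x| ∂μ := by
  rw [← integral_indicator hA]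
  congr 1
  ext x
  by_cases hx : x ∈ A
  · simp only [indicator_of_mem hx, Real.self_mul_sign]
  · simp only [indicator_of_notMem hx, mul_zero]

lemma integral_mul_indicator_sign_le [IsFiniteMeasure μ] (hf : Integrable f μ)
    (hg : AEStronglyMeasurable g μ) (hA : MeasurableSet A) {c : ℝ} (hfc : ∀ᵐ x ∂μ, |f x| ≤ c) :
    ∫ x, f x * A.indicator (fun y => Real.sign (g y)) x ∂μ ≤ μ.real A * c := by
  have hfg : Integrable (fun x => f x * A.indicator (fun y => Real.sign (g y)) x) μ :=
    hf.mul_of_top_left (memLp_indicator_sign hg hA ⊤)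
  calc ∫ x, f x * A.indicator (fun y => Real.sign (g y)) x ∂μ
      ≤ ∫ x, A.indicator (fun _ => c) x ∂μ := by
        refine integral_mono_ae hfg ((integrable_const c).indicator hA) ?_
        filter_upwards [hfc] with x hx
        by_cases hxA : x ∈ A
        · rw [indicator_of_mem hxA, indicator_of_mem hxA]
          calc f x * Real.sign (g x) ≤ |f x| * |Real.sign (g x)| :=
                (le_abs_self _).trans (abs_mul _ _).le
            _ ≤ |f x| := mul_le_of_le_one_right (abs_nonneg _) (Real.abs_sign_le_one _)
            _ ≤ c := hx
        · simp [indicator_of_notMem hxA]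
    _ = μ.real A * c := by rw [integral_indicator_const c hA, smul_eq_mul]

theorem ae_abs_le_of_tendsto_integral_mul [IsFiniteMeasure μ] {ι : Type*} {l : Filter ι}
    {φn : ι → X → ℝ} {φ : X → ℝ} {c : ι → ℝ} {c₀ : ℝ} {p : ℝ≥0∞}
    (hφn : ∀ n, Integrable (φn n) μ) (hφ : Integrable φ μ) (hc : Tendsto c l (𝓝 c₀))
    (hweak : ∀ g : X → ℝ, MemLp g p μ →
      Tendsto (fun n => ∫ x, φn n x * g x ∂μ) l (𝓝 (∫ x, φ x * g x ∂μ)))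
    (hbound : ∃ᶠ n in l, ∀ᵐ x ∂μ, |φn n x| ≤ c n) :
    ∀ᵐ x ∂μ, |φ x| ≤ c₀ := by
  refine ae_le_of_forall_setIntegral_le hφ.abs (integrable_const c₀) fun A hA _ => ?_
  rw [← integral_mul_indicator_sign_self hA, setIntegral_const, smul_eq_mul]
  exact le_of_tendsto_of_tendsto_of_frequently
    (hweak _ (memLp_indicator_sign hφ.aestronglyMeasurable hA p)) (hc.const_mul _)
    (hbound.mono fun n hn =>
      integral_mul_indicator_sign_le (hφn n) hφ.aestronglyMeasurable hA hn)

end WeakLimit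

lemma isFiniteMeasure_Qmeasure {Ω : Set (EuclideanSpace ℝ (Fin 3))} (hΩ : Bornology.IsBounded Ω)
    (T' : ℝ) : IsFiniteMeasure (Qmeasure Ω T') :=
  isFiniteMeasure_restrict.2 (hΩ.prod (Metric.isBounded_Ioo 0 T')).measure_lt_top.ne

lemma top_le_liminf_Esg {X ι : Type*} [MeasurableSpace X] {μ : Measure X} {l : Filter ι}
    {α : ι → ℝ} {φn : ι → X → ℝ} (h : ¬ ∃ᶠ n in l, ∀ᵐ x ∂μ, |φn n x| ≤ 1 + α n) :
    ⊤ ≤ l.liminf fun n => Esg μ (α n) (φn n) := by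
  rw [not_frequently] at h
  exact le_liminf_of_le (by isBoundedDefault) (h.mono fun n hn => by rw [Esg, if_neg hn])

theorem stmt_2_general
    (T' : ℝ)
    (Ω : Set (EuclideanSpace ℝ (Fin 3)))
    (hΩb : Bornology.IsBounded Ω)
    (α : ℕ → ℝ)
    (hα0 : Tendsto α atTop (nhds 0))
    (φn : ℕ → EuclideanSpace ℝ (Fin 3) × ℝ → ℝ)
    (φ : EuclideanSpace ℝ (Fin 3) × ℝ → ℝ)
    (hφn : ∀ n, MemLp (φn n) 2 (Qmeasure Ω T'))
    (hφ : MemLp φ 2 (Qmeasure Ω T'))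
    (hweak : ∀ g : EuclideanSpace ℝ (Fin 3) × ℝ → ℝ, MemLp g 2 (Qmeasure Ω T') →
      Tendsto (fun n => ∫ x, φn n x * g x ∂(Qmeasure Ω T')) atTop
        (nhds (∫ x, φ x * g x ∂(Qmeasure Ω T')))) :
    IK (Qmeasure Ω T') φ ≤ atTop.liminf (fun n => Esg (Qmeasure Ω T') (α n) (φn n)) := by
  have := isFiniteMeasure_Qmeasure hΩb T'
  rw [IK]
  split_ifs with hK
  · exact zero_le
  refine top_le_liminf_Esg fun hfreq => hK ?_
  have hc : Tendsto (fun n => 1 + α n) atTop (𝓝 1) := by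
    simpa using tendsto_const_nhds.add hα0
  exact ae_abs_le_of_tendsto_integral_mul (fun n => (hφn n).integrable one_le_two)
    (hφ.integrable one_le_two) hc hweak hfreq

/-- **Mosco liminf inequality.** If `α_n ∈ (0,1)`, `α_n → 0`, and
`φ_n ⇀ φ` weakly in `L²(Q)`, then `liminf_n E_{sg,α_n}(φ_n) ≥ I_K(φ)`. -/
theorem stmt_2
    (T' : ℝ) (hT' : 0 < T')
    (Ω : Set (EuclideanSpace ℝ (Fin 3)))
    (hΩo : IsOpen Ω) (hΩc : IsConnected Ω) (hΩb : Bornology.IsBounded Ω)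
    (α : ℕ → ℝ) (hα : ∀ n, α n ∈ Set.Ioo (0 : ℝ) 1)
    (hα0 : Tendsto α atTop (nhds 0))
    (φn : ℕ → EuclideanSpace ℝ (Fin 3) × ℝ → ℝ)
    (φ : EuclideanSpace ℝ (Fin 3) × ℝ → ℝ)
    (hφn : ∀ n, MemLp (φn n) 2 (Qmeasure Ω T'))
    (hφ : MemLp φ 2 (Qmeasure Ω T'))
    (hweak : ∀ g : EuclideanSpace ℝ (Fin 3) × ℝ → ℝ, MemLp g 2 (Qmeasure Ω T') →
      Tendsto (fun n => ∫ x, φn n x * g x ∂(Qmeasure Ω T')) atTop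
        (nhds (∫ x, φ x * g x ∂(Qmeasure Ω T')))) :
    IK (Qmeasure Ω T') φ ≤ atTop.liminf (fun n => Esg (Qmeasure Ω T') (α n) (φn n)) :=
  stmt_2_general T' Ω hΩb α hα0 φn φ hφn hφ hweak
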